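/- For every x ∈ ℝᵈ, the infimum over P ∈ 𝒜 of xᵀ Hᵀ P⁻¹ H x equals the supremum over ω ∈ [0,1] of xᵀ A_F(ω) x, and both the infimum and the supremum are attained: g(x) = max_{ω ∈ [0,1]} h_x(ω) = min_{P ∈ 𝒜} xᵀ Hᵀ P⁻¹ H x. -/

import Mathlib

open Matrix Set

noncomputable section

/-- `H = [I_d; I_d]`, the two vertically stacked `d×d` identity blocks. -/
def Hmat (d : ℕ) : Matrix (Fin d ⊕ Fin d) (Fin d) ℝ :=
  Matrix.fromRows 1 1

/-- The admissible set `𝒜`: all matrices `P⁽¹⁾ + S` with `P⁽¹⁾` positive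
semidefinite with diagonal blocks `P₁` and `P₂`. -/
def Adm (d : ℕ) (P₁ P₂ : Matrix (Fin d) (Fin d) ℝ)
    (S : Matrix (Fin d ⊕ Fin d) (Fin d ⊕ Fin d) ℝ) :
    Set (Matrix (Fin d ⊕ Fin d) (Fin d ⊕ Fin d) ℝ) :=
  {P | ∃ Q : Matrix (Fin d ⊕ Fin d) (Fin d ⊕ Fin d) ℝ,
      Q.PosSemidef ∧ Q.toBlocks₁₁ = P₁ ∧ Q.toBlocks₂₂ = P₂ ∧ P = Q + S}

/-- The ESCI centralized bound `Bc(ω) = blockdiag(ω⁻¹ P₁, (1-ω)⁻¹ P₂) + S`. -/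
def Bc (d : ℕ) (P₁ P₂ : Matrix (Fin d) (Fin d) ℝ)
    (S : Matrix (Fin d ⊕ Fin d) (Fin d ⊕ Fin d) ℝ) (ω : ℝ) :
    Matrix (Fin d ⊕ Fin d) (Fin d ⊕ Fin d) ℝ :=
  Matrix.fromBlocks (ω⁻¹ • P₁) 0 0 ((1 - ω)⁻¹ • P₂) + S

/-- The fused ESCI precision matrix `A_F(ω) = Hᵀ Bc(ω)⁻¹ H`, continuously
extended at the endpoints. -/
def AF (d : ℕ) (P₁ P₂ : Matrix (Fin d) (Fin d) ℝ)
    (S : Matrix (Fin d ⊕ Fin d) (Fin d ⊕ Fin d) ℝ) (ω : ℝ) :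
    Matrix (Fin d) (Fin d) ℝ :=
  if ω = 0 then (P₂ + S.toBlocks₂₂)⁻¹
  else if ω = 1 then (P₁ + S.toBlocks₁₁)⁻¹
  else (Hmat d)ᵀ * (Bc d P₁ P₂ S ω)⁻¹ * Hmat d

/-- The fused ESCI bound `B_F(ω) = A_F(ω)⁻¹`. -/
def BF (d : ℕ) (P₁ P₂ : Matrix (Fin d) (Fin d) ℝ)
    (S : Matrix (Fin d ⊕ Fin d) (Fin d ⊕ Fin d) ℝ) (ω : ℝ) :
    Matrix (Fin d) (Fin d) ℝ :=
  (AF d P₁ P₂ S ω)⁻¹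

/-- `g(x) = inf_{P ∈ 𝒜} xᵀ Hᵀ P⁻¹ H x`. -/
def gfun (d : ℕ) (P₁ P₂ : Matrix (Fin d) (Fin d) ℝ)
    (S : Matrix (Fin d ⊕ Fin d) (Fin d ⊕ Fin d) ℝ) (x : Fin d → ℝ) : ℝ :=
  ⨅ P : (Adm d P₁ P₂ S),
    x ⬝ᵥ ((Hmat d)ᵀ * ((P : Matrix (Fin d ⊕ Fin d) (Fin d ⊕ Fin d) ℝ))⁻¹ * Hmat d) *ᵥ x

/-- `h_x(ω) = xᵀ A_F(ω) x`. -/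
def hfun (d : ℕ) (P₁ P₂ : Matrix (Fin d) (Fin d) ℝ)
    (S : Matrix (Fin d ⊕ Fin d) (Fin d ⊕ Fin d) ℝ) (x : Fin d → ℝ) (ω : ℝ) : ℝ :=
  x ⬝ᵥ (AF d P₁ P₂ S ω) *ᵥ x


/-!
Write `y = Hx`, `N₁ = √(·ᵀ P₁ ·)`, `N₂ = √(·ᵀ P₂ ·)` and, for `z = (z₁, z₂)`, consider the dual
objective `χ(z) = 2 zᵀy - zᵀ S z - (N₁ z₁ + N₂ z₂)²`.

Weak duality. For `P = P⁽¹⁾ + S ∈ 𝒜`, the triangle inequality for the seminorm of `P⁽¹⁾` gives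
`zᵀ P⁽¹⁾ z ≤ (N₁ z₁ + N₂ z₂)²`, so `χ(z) ≤ 2 zᵀy - zᵀ P z ≤ yᵀ P⁻¹ y`. Conversely
`(a + b)² ≤ a²/ω + b²/(1 - ω)`, so `2 zᵀy - zᵀ Bc(ω) z ≤ χ(z)`, whose supremum over `z` is
`h_x(ω)` (at the endpoints, restrict `z` to one block).

Strong duality. `χ` is coercive, so it has a maximiser `z`; let `a = N₁ z₁`, `b = N₂ z₂`.
If `a, b > 0`, the AM–GM bound is tight at `ω = a / (a + b)`, so `z` also maximises
`2 wᵀy - wᵀ Bc(ω) w`, i.e. `Bc(ω) z = y`. The rank-one coupling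
`P⁽¹⁾ = [[P₁, (ab)⁻¹ P₁z₁ (P₂z₂)ᵀ], [·ᵀ, P₂]]` is positive semidefinite and
`P⁽¹⁾ z = blockdiag(P₁/ω, P₂/(1 - ω)) z`, so `(P⁽¹⁾ + S) z = y` and
`yᵀ (P⁽¹⁾ + S)⁻¹ y = zᵀy = h_x(ω)`. If `z₂ = 0`, then `(P₁ + S₁₁) z₁ = x`, and the one-sided
derivative of `χ` in the directions `(0, v)` bounds the residual `x - S₂₁ z₁` in the dual norm of
`N₂` by `a`, which is exactly what a rank-one coupling needs to match it: the value `h_x(1)` is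
attained. The case `z₁ = 0` is symmetric.
-/

lemma nonpos_of_forall_pos_mul_le {c C : ℝ} (h : ∀ ε > 0, ε * c ≤ ε ^ 2 * C) : c ≤ 0 := by
  by_contra! hc
  set ε := c / (2 * (|C| + 1))
  have hε : 0 < ε := by positivity
  have hcε : c ≤ ε * C := by
    have := h ε hε
    rw [sq, mul_assoc] at this
    exact le_of_mul_le_mul_left this hε
  have : ε * C ≤ c / 2 :=
    calc ε * C ≤ ε * (|C| + 1) := mul_le_mul_of_nonneg_left (by linarith [le_abs_self C]) hε.le
      _ = c / 2 := by simp only [ε]; field_simp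
  linarith

lemma add_sq_le_inv_mul_sq_add_inv_mul_sq (a b : ℝ) {ω : ℝ} (h0 : 0 < ω) (h1 : ω < 1) :
    (a + b) ^ 2 ≤ ω⁻¹ * a ^ 2 + (1 - ω)⁻¹ * b ^ 2 := by
  have h1' : 0 < 1 - ω := sub_pos.2 h1
  have key : ω⁻¹ * a ^ 2 + (1 - ω)⁻¹ * b ^ 2 - (a + b) ^ 2
      = ((1 - ω) * a - ω * b) ^ 2 / (ω * (1 - ω)) := by
    field_simp
    ring
  rw [← sub_nonneg, key]
  positivity

lemma inv_mul_sq_add_inv_mul_sq_eq {a b : ℝ} (ha : 0 < a) (hb : 0 < b) :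
    (a / (a + b))⁻¹ * a ^ 2 + (1 - a / (a + b))⁻¹ * b ^ 2 = (a + b) ^ 2 := by
  rw [show 1 - a / (a + b) = b / (a + b) by field_simp; ring, inv_div, inv_div]
  field_simp

namespace Matrix

section QuadNorm

variable {n : Type*} [Fintype n] {M : Matrix n n ℝ}

lemma IsHermitian.dotProduct_mulVec_comm (hM : M.IsHermitian) (u v : n → ℝ) :
    u ⬝ᵥ M *ᵥ v = v ⬝ᵥ M *ᵥ u := by
  rw [← dotProduct_transpose_mulVec, ← conjTranspose_eq_transpose_of_trivial, hM]

lemma IsHermitian.add_dotProduct_mulVec_add (hM : M.IsHermitian) (u v : n → ℝ) :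
    (u + v) ⬝ᵥ M *ᵥ (u + v) = u ⬝ᵥ M *ᵥ u + 2 * (u ⬝ᵥ M *ᵥ v) + v ⬝ᵥ M *ᵥ v := by
  rw [mulVec_add, add_dotProduct, dotProduct_add, dotProduct_add, hM.dotProduct_mulVec_comm v u]
  ring

lemma smul_dotProduct_mulVec_smul (M : Matrix n n ℝ) (c : ℝ) (u : n → ℝ) :
    (c • u) ⬝ᵥ M *ᵥ (c • u) = c ^ 2 * (u ⬝ᵥ M *ᵥ u) := by
  rw [mulVec_smul, dotProduct_smul, smul_dotProduct, smul_eq_mul, smul_eq_mul]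
  ring

def quadNorm (M : Matrix n n ℝ) (v : n → ℝ) : ℝ := √(v ⬝ᵥ M *ᵥ v)

lemma quadNorm_nonneg (M : Matrix n n ℝ) (v : n → ℝ) : 0 ≤ quadNorm M v := Real.sqrt_nonneg _

@[simp] lemma quadNorm_zero (M : Matrix n n ℝ) : quadNorm M 0 = 0 := by simp [quadNorm]

lemma quadNorm_smul (M : Matrix n n ℝ) (c : ℝ) (v : n → ℝ) :
    quadNorm M (c • v) = |c| * quadNorm M v := by
  rw [quadNorm, quadNorm, smul_dotProduct_mulVec_smul, Real.sqrt_mul (sq_nonneg c),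
    Real.sqrt_sq_eq_abs]

lemma PosSemidef.dotProduct_mulVec_self_nonneg (hM : M.PosSemidef) (v : n → ℝ) :
    0 ≤ v ⬝ᵥ M *ᵥ v := by
  simpa using hM.dotProduct_mulVec_nonneg v

lemma PosSemidef.sq_quadNorm (hM : M.PosSemidef) (v : n → ℝ) :
    quadNorm M v ^ 2 = v ⬝ᵥ M *ᵥ v :=
  Real.sq_sqrt (hM.dotProduct_mulVec_self_nonneg v)

lemma PosSemidef.abs_dotProduct_mulVec_le (hM : M.PosSemidef) (u v : n → ℝ) :
    |u ⬝ᵥ M *ᵥ v| ≤ quadNorm M u * quadNorm M v := by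
  have hquad : ∀ t : ℝ, 0 ≤ (v ⬝ᵥ M *ᵥ v) * (t * t) + 2 * (u ⬝ᵥ M *ᵥ v) * t + u ⬝ᵥ M *ᵥ u :=
    fun t => by
      have h := hM.dotProduct_mulVec_self_nonneg (u + t • v)
      rw [hM.isHermitian.add_dotProduct_mulVec_add, smul_dotProduct_mulVec_smul, mulVec_smul,
        dotProduct_smul, smul_eq_mul] at h
      linarith
  have hdisc := discrim_le_zero hquad
  rw [discrim] at hdisc
  refine abs_le_of_sq_le_sq ?_ (mul_nonneg (quadNorm_nonneg M u) (quadNorm_nonneg M v))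
  rw [mul_pow, hM.sq_quadNorm, hM.sq_quadNorm]
  linarith

lemma PosSemidef.quadNorm_add_le (hM : M.PosSemidef) (u v : n → ℝ) :
    quadNorm M (u + v) ≤ quadNorm M u + quadNorm M v := by
  have hcs := le_of_abs_le (hM.abs_dotProduct_mulVec_le u v)
  have hsq : (u + v) ⬝ᵥ M *ᵥ (u + v) ≤ (quadNorm M u + quadNorm M v) ^ 2 := by
    rw [hM.isHermitian.add_dotProduct_mulVec_add, add_sq, hM.sq_quadNorm, hM.sq_quadNorm]
    linarith
  calc quadNorm M (u + v) ≤ √((quadNorm M u + quadNorm M v) ^ 2) := Real.sqrt_le_sqrt hsq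
    _ = quadNorm M u + quadNorm M v :=
      Real.sqrt_sq (add_nonneg (quadNorm_nonneg M u) (quadNorm_nonneg M v))

lemma PosDef.quadNorm_pos (hM : M.PosDef) {v : n → ℝ} (hv : v ≠ 0) : 0 < quadNorm M v :=
  Real.sqrt_pos.2 (by simpa using hM.dotProduct_mulVec_pos hv)

lemma PosDef.exists_pos_mul_sq_norm_le (hM : M.PosDef) :
    ∃ ε > 0, ∀ v : n → ℝ, ε * ‖v‖ ^ 2 ≤ v ⬝ᵥ M *ᵥ v := by
  rcases isEmpty_or_nonempty n with hn | hn
  · exact ⟨1, one_pos, fun v => by simp [Subsingleton.elim v 0]⟩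
  obtain ⟨u, hu, hmin⟩ := (isCompact_sphere (0 : n → ℝ) 1).exists_isMinOn
    (NormedSpace.sphere_nonempty.2 zero_le_one)
    (by fun_prop : Continuous fun v => v ⬝ᵥ M *ᵥ v).continuousOn
  have hu0 : u ≠ 0 := by
    rintro rfl
    simp at hu
  refine ⟨u ⬝ᵥ M *ᵥ u, by simpa using hM.dotProduct_mulVec_pos hu0, fun v => ?_⟩
  rcases eq_or_ne v 0 with rfl | hv
  · simp
  have hnv : ‖v‖ ≠ 0 := norm_ne_zero_iff.2 hv
  have hmin_v := hmin (show ‖v‖⁻¹ • v ∈ Metric.sphere (0 : n → ℝ) 1 by simp [norm_smul, hnv])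
  simp only [Set.mem_ofPred_eq, smul_dotProduct_mulVec_smul, inv_pow] at hmin_v
  rwa [← div_eq_inv_mul, le_div_iff₀ (by positivity)] at hmin_v

end QuadNorm

namespace PosDef

variable {n : Type*} [Fintype n] [DecidableEq n] {M : Matrix n n ℝ}

lemma mulVec_inv_mulVec (hM : M.PosDef) (y : n → ℝ) : M *ᵥ (M⁻¹ *ᵥ y) = y := by
  rw [mulVec_mulVec, mul_nonsing_inv _ ((isUnit_iff_isUnit_det M).1 hM.isUnit), one_mulVec]

lemma inv_mulVec_eq_of_mulVec_eq (hM : M.PosDef) {y z : n → ℝ} (h : M *ᵥ z = y) :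
    M⁻¹ *ᵥ y = z := by
  have := hM.isUnit.invertible
  exact inv_mulVec_eq_vec h.symm

lemma dotProduct_inv_mulVec_sub_eq (hM : M.PosDef) (y z : n → ℝ) :
    y ⬝ᵥ M⁻¹ *ᵥ y - (2 * (z ⬝ᵥ y) - z ⬝ᵥ M *ᵥ z)
      = (z - M⁻¹ *ᵥ y) ⬝ᵥ M *ᵥ (z - M⁻¹ *ᵥ y) := by
  rw [sub_eq_add_neg z, hM.isHermitian.add_dotProduct_mulVec_add]
  simp only [mulVec_neg, dotProduct_neg, neg_neg, hM.mulVec_inv_mulVec, dotProduct_comm _ y]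
  ring

lemma two_dotProduct_sub_le (hM : M.PosDef) (y z : n → ℝ) :
    2 * (z ⬝ᵥ y) - z ⬝ᵥ M *ᵥ z ≤ y ⬝ᵥ M⁻¹ *ᵥ y := by
  linarith [hM.dotProduct_inv_mulVec_sub_eq y z ▸
    hM.posSemidef.dotProduct_mulVec_self_nonneg (z - M⁻¹ *ᵥ y)]

lemma two_dotProduct_sub_eq (hM : M.PosDef) {y z : n → ℝ} (h : M *ᵥ z = y) :
    2 * (z ⬝ᵥ y) - z ⬝ᵥ M *ᵥ z = y ⬝ᵥ M⁻¹ *ᵥ y := by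
  rw [hM.inv_mulVec_eq_of_mulVec_eq h, h, dotProduct_comm]
  ring

lemma mulVec_eq_of_forall_le (hM : M.PosDef) {y z : n → ℝ}
    (hz : ∀ w, 2 * (w ⬝ᵥ y) - w ⬝ᵥ M *ᵥ w ≤ 2 * (z ⬝ᵥ y) - z ⬝ᵥ M *ᵥ z) : M *ᵥ z = y := by
  set u := M⁻¹ *ᵥ y
  have hzero : (z - u) ⬝ᵥ M *ᵥ (z - u) = 0 :=
    le_antisymm (by linarith [hM.dotProduct_inv_mulVec_sub_eq y z, hz u,
        hM.two_dotProduct_sub_eq (hM.mulVec_inv_mulVec y)])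
      (hM.posSemidef.dotProduct_mulVec_self_nonneg _)
  have hzu : z - u = 0 := by
    by_contra hne
    exact (hM.dotProduct_mulVec_pos hne).ne' (by simpa using hzero)
  rw [sub_eq_zero.1 hzu, hM.mulVec_inv_mulVec]

lemma exists_forall_le_of_le_two_dotProduct_sub (hM : M.PosDef) (y : n → ℝ)
    {f : (n → ℝ) → ℝ} (hf : Continuous f) (hle : ∀ z, f z ≤ 2 * (z ⬝ᵥ y) - z ⬝ᵥ M *ᵥ z) :
    ∃ z, ∀ w, f w ≤ f z := by
  obtain ⟨ε, hε, hcoer⟩ := hM.exists_pos_mul_sq_norm_le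
  refine hf.exists_forall_ge_of_isBounded 0 ((Metric.isBounded_closedBall (x := M⁻¹ *ᵥ y)
    (r := √((y ⬝ᵥ M⁻¹ *ᵥ y - f 0) / ε))).subset fun z (hz : f 0 ≤ f z) => ?_)
  rw [Metric.mem_closedBall, dist_eq_norm]
  refine Real.le_sqrt_of_sq_le ((le_div_iff₀ hε).2 ?_)
  linarith [hM.dotProduct_inv_mulVec_sub_eq y z, hcoer (z - M⁻¹ *ᵥ y), hle z]

lemma quadNorm_inv_mulVec_le (hM : M.PosDef) {a : ℝ} (ha : 0 ≤ a) {r : n → ℝ}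
    (h : ∀ v, v ⬝ᵥ r ≤ a * quadNorm M v) : quadNorm M (M⁻¹ *ᵥ r) ≤ a := by
  have hsq := hM.posSemidef.sq_quadNorm (M⁻¹ *ᵥ r)
  rw [hM.mulVec_inv_mulVec] at hsq
  nlinarith [h (M⁻¹ *ᵥ r), quadNorm_nonneg M (M⁻¹ *ᵥ r)]

end PosDef

section Blocks

lemma PosDef.toBlocks₁₁ {n₁ n₂ : Type*} {S : Matrix (n₁ ⊕ n₂) (n₁ ⊕ n₂) ℝ} (hS : S.PosDef) :
    S.toBlocks₁₁.PosDef :=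
  hS.submatrix Sum.inl_injective

lemma PosDef.toBlocks₂₂ {n₁ n₂ : Type*} {S : Matrix (n₁ ⊕ n₂) (n₁ ⊕ n₂) ℝ} (hS : S.PosDef) :
    S.toBlocks₂₂.PosDef :=
  hS.submatrix Sum.inr_injective

variable {n₁ n₂ : Type*} [Fintype n₁] [Fintype n₂]

lemma sumElim_dotProduct_mulVec_sumElim (M : Matrix (n₁ ⊕ n₂) (n₁ ⊕ n₂) ℝ)
    (u₁ v₁ : n₁ → ℝ) (u₂ v₂ : n₂ → ℝ) :
    Sum.elim u₁ u₂ ⬝ᵥ M *ᵥ Sum.elim v₁ v₂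
      = u₁ ⬝ᵥ M.toBlocks₁₁ *ᵥ v₁ + u₁ ⬝ᵥ M.toBlocks₁₂ *ᵥ v₂
        + (u₂ ⬝ᵥ M.toBlocks₂₁ *ᵥ v₁ + u₂ ⬝ᵥ M.toBlocks₂₂ *ᵥ v₂) := by
  rw [← fromBlocks_toBlocks M, fromBlocks_mulVec]
  simp [sumElim_dotProduct_sumElim, dotProduct_add]

lemma mulVec_sumElim_zero (M : Matrix (n₁ ⊕ n₂) (n₁ ⊕ n₂) ℝ) (v : n₁ → ℝ) :
    M *ᵥ Sum.elim v 0 = Sum.elim (M.toBlocks₁₁ *ᵥ v) (M.toBlocks₂₁ *ᵥ v) := by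
  rw [← fromBlocks_toBlocks M, fromBlocks_mulVec]
  simp

lemma mulVec_zero_sumElim (M : Matrix (n₁ ⊕ n₂) (n₁ ⊕ n₂) ℝ) (v : n₂ → ℝ) :
    M *ᵥ Sum.elim 0 v = Sum.elim (M.toBlocks₁₂ *ᵥ v) (M.toBlocks₂₂ *ᵥ v) := by
  rw [← fromBlocks_toBlocks M, fromBlocks_mulVec]
  simp

lemma PosSemidef.fromBlocks_zero {A : Matrix n₁ n₁ ℝ} {D : Matrix n₂ n₂ ℝ}
    (hA : A.PosSemidef) (hD : D.PosSemidef) : (fromBlocks A 0 0 D).PosSemidef := by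
  refine .of_dotProduct_mulVec_nonneg (hA.1.fromBlocks (by simp) hD.1) fun v => ?_
  rw [star_trivial, ← Sum.elim_comp_inl_inr v, sumElim_dotProduct_mulVec_sumElim]
  simpa using add_nonneg (hA.dotProduct_mulVec_self_nonneg _) (hD.dotProduct_mulVec_self_nonneg _)

lemma PosSemidef.dotProduct_mulVec_le_sq_quadNorm_add {P₁ : Matrix n₁ n₁ ℝ}
    {P₂ : Matrix n₂ n₂ ℝ} {Q : Matrix (n₁ ⊕ n₂) (n₁ ⊕ n₂) ℝ} (hQ : Q.PosSemidef)
    (h₁₁ : Q.toBlocks₁₁ = P₁) (h₂₂ : Q.toBlocks₂₂ = P₂) (z : n₁ ⊕ n₂ → ℝ) :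
    z ⬝ᵥ Q *ᵥ z ≤ (quadNorm P₁ (z ∘ Sum.inl) + quadNorm P₂ (z ∘ Sum.inr)) ^ 2 := by
  set z₁ := z ∘ Sum.inl
  set z₂ := z ∘ Sum.inr
  have hsplit : Sum.elim z₁ (0 : n₂ → ℝ) + Sum.elim (0 : n₁ → ℝ) z₂ = z := by
    ext (i | i) <;> simp [z₁, z₂]
  have h₁ : quadNorm Q (Sum.elim z₁ 0) = quadNorm P₁ z₁ := by
    simp [quadNorm, sumElim_dotProduct_mulVec_sumElim, h₁₁]
  have h₂ : quadNorm Q (Sum.elim 0 z₂) = quadNorm P₂ z₂ := by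
    simp [quadNorm, sumElim_dotProduct_mulVec_sumElim, h₂₂]
  have htri := hQ.quadNorm_add_le (Sum.elim z₁ 0) (Sum.elim 0 z₂)
  rw [hsplit, h₁, h₂] at htri
  rw [← hQ.sq_quadNorm]
  exact pow_le_pow_left₀ (quadNorm_nonneg Q z) htri 2

end Blocks

end Matrix

section Coupling

variable {n₁ n₂ : Type*} [Fintype n₁] [Fintype n₂] {P₁ : Matrix n₁ n₁ ℝ} {P₂ : Matrix n₂ n₂ ℝ}

variable (P₁ P₂) in
def coupling (c : ℝ) (p : n₁ → ℝ) (q : n₂ → ℝ) : Matrix (n₁ ⊕ n₂) (n₁ ⊕ n₂) ℝ :=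
  fromBlocks P₁ (c • vecMulVec (P₁ *ᵥ p) (P₂ *ᵥ q)) (c • vecMulVec (P₂ *ᵥ q) (P₁ *ᵥ p)) P₂

@[simp] lemma coupling_toBlocks₁₁ (c : ℝ) (p : n₁ → ℝ) (q : n₂ → ℝ) :
    (coupling P₁ P₂ c p q).toBlocks₁₁ = P₁ :=
  toBlocks_fromBlocks₁₁ ..

@[simp] lemma coupling_toBlocks₂₂ (c : ℝ) (p : n₁ → ℝ) (q : n₂ → ℝ) :
    (coupling P₁ P₂ c p q).toBlocks₂₂ = P₂ :=
  toBlocks_fromBlocks₂₂ ..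

lemma coupling_mulVec (c : ℝ) (p u₁ : n₁ → ℝ) (q u₂ : n₂ → ℝ) :
    coupling P₁ P₂ c p q *ᵥ Sum.elim u₁ u₂
      = Sum.elim (P₁ *ᵥ u₁ + (c * ((P₂ *ᵥ q) ⬝ᵥ u₂)) • (P₁ *ᵥ p))
          (P₂ *ᵥ u₂ + (c * ((P₁ *ᵥ p) ⬝ᵥ u₁)) • (P₂ *ᵥ q)) := by
  simp only [coupling, fromBlocks_mulVec, Sum.elim_comp_inl, Sum.elim_comp_inr, smul_mulVec,
    vecMulVec_mulVec, op_smul_eq_smul, smul_smul]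
  rw [add_comm (_ • _)]

lemma posSemidef_coupling (hP₁ : P₁.PosSemidef) (hP₂ : P₂.PosSemidef) {c : ℝ} (hc : 0 ≤ c)
    {p : n₁ → ℝ} {q : n₂ → ℝ} (h : c * (quadNorm P₁ p * quadNorm P₂ q) ≤ 1) :
    (coupling P₁ P₂ c p q).PosSemidef := by
  refine .of_dotProduct_mulVec_nonneg (hP₁.1.fromBlocks ?_ hP₂.1) fun v => ?_
  · simp [conjTranspose_eq_transpose_of_trivial]
  rw [star_trivial, ← Sum.elim_comp_inl_inr v, sumElim_dotProduct_mulVec_sumElim]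
  set v₁ := v ∘ Sum.inl
  set v₂ := v ∘ Sum.inr
  simp only [coupling, toBlocks_fromBlocks₁₁, toBlocks_fromBlocks₁₂, toBlocks_fromBlocks₂₁,
    toBlocks_fromBlocks₂₂, smul_mulVec, dotProduct_smul, smul_eq_mul, vecMulVec_mulVec,
    op_smul_eq_smul]
  rw [← hP₁.sq_quadNorm, ← hP₂.sq_quadNorm, dotProduct_comm (P₂ *ᵥ q), dotProduct_comm (P₁ *ᵥ p)]
  set α := v₁ ⬝ᵥ P₁ *ᵥ p
  set γ := v₂ ⬝ᵥ P₂ *ᵥ q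
  have hαγ : c * |α * γ| ≤ quadNorm P₁ v₁ * quadNorm P₂ v₂ :=
    calc c * |α * γ|
        ≤ c * ((quadNorm P₁ v₁ * quadNorm P₁ p) * (quadNorm P₂ v₂ * quadNorm P₂ q)) := by
          rw [abs_mul]
          exact mul_le_mul_of_nonneg_left (mul_le_mul (hP₁.abs_dotProduct_mulVec_le v₁ p)
            (hP₂.abs_dotProduct_mulVec_le v₂ q) (abs_nonneg _)
            (mul_nonneg (quadNorm_nonneg _ _) (quadNorm_nonneg _ _))) hc
      _ = (quadNorm P₁ v₁ * quadNorm P₂ v₂) * (c * (quadNorm P₁ p * quadNorm P₂ q)) := by ring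
      _ ≤ quadNorm P₁ v₁ * quadNorm P₂ v₂ :=
          mul_le_of_le_one_right (mul_nonneg (quadNorm_nonneg _ _) (quadNorm_nonneg _ _)) h
  nlinarith [neg_abs_le (α * γ), sq_nonneg (quadNorm P₁ v₁ - quadNorm P₂ v₂)]

lemma coupling_inv_mul_mulVec (hP₁ : P₁.PosSemidef) (hP₂ : P₂.PosSemidef) {z₁ : n₁ → ℝ}
    {z₂ : n₂ → ℝ} (ha : 0 < quadNorm P₁ z₁) (hb : 0 < quadNorm P₂ z₂) :
    coupling P₁ P₂ (quadNorm P₁ z₁ * quadNorm P₂ z₂)⁻¹ z₁ z₂ *ᵥ Sum.elim z₁ z₂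
      = Sum.elim
          ((quadNorm P₁ z₁ / (quadNorm P₁ z₁ + quadNorm P₂ z₂))⁻¹ • (P₁ *ᵥ z₁))
          ((1 - quadNorm P₁ z₁ / (quadNorm P₁ z₁ + quadNorm P₂ z₂))⁻¹ • (P₂ *ᵥ z₂)) := by
  set a := quadNorm P₁ z₁
  set b := quadNorm P₂ z₂
  have e₁ : 1 + (a * b)⁻¹ * b ^ 2 = (a / (a + b))⁻¹ := by field_simp
  have e₂ : 1 + (a * b)⁻¹ * a ^ 2 = (1 - a / (a + b))⁻¹ := by
    rw [show 1 - a / (a + b) = b / (a + b) by field_simp; ring, inv_div]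
    field_simp
    ring
  have h₁ : (P₁ *ᵥ z₁) ⬝ᵥ z₁ = a ^ 2 := by rw [dotProduct_comm, hP₁.sq_quadNorm]
  have h₂ : (P₂ *ᵥ z₂) ⬝ᵥ z₂ = b ^ 2 := by rw [dotProduct_comm, hP₂.sq_quadNorm]
  rw [coupling_mulVec, h₁, h₂, ← e₁, ← e₂, add_smul, add_smul, one_smul, one_smul]

lemma exists_coupling_mulVec_sumElim_zero [DecidableEq n₂] (hP₁ : P₁.PosSemidef)
    (hP₂ : P₂.PosDef) (z₁ : n₁ → ℝ) {r : n₂ → ℝ}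
    (h : ∀ v, v ⬝ᵥ r ≤ quadNorm P₁ z₁ * quadNorm P₂ v) :
    ∃ Q : Matrix (n₁ ⊕ n₂) (n₁ ⊕ n₂) ℝ, Q.PosSemidef ∧ Q.toBlocks₁₁ = P₁ ∧ Q.toBlocks₂₂ = P₂ ∧
      Q *ᵥ Sum.elim z₁ 0 = Sum.elim (P₁ *ᵥ z₁) r := by
  set a := quadNorm P₁ z₁
  set w := P₂⁻¹ *ᵥ r with hw_def
  have hβ : quadNorm P₂ w ≤ a := hP₂.quadNorm_inv_mulVec_le (quadNorm_nonneg _ _) h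
  have hz₁ : (P₁ *ᵥ z₁) ⬝ᵥ z₁ = a ^ 2 := by rw [dotProduct_comm, hP₁.sq_quadNorm]
  refine ⟨coupling P₁ P₂ (a ^ 2)⁻¹ z₁ w, posSemidef_coupling hP₁ hP₂.posSemidef (by positivity) ?_,
    coupling_toBlocks₁₁ .., coupling_toBlocks₂₂ .., ?_⟩ <;> rcases eq_or_ne a 0 with ha | ha
  · simp [ha]
  · rw [← div_eq_inv_mul, div_le_one (by positivity)]
    nlinarith [quadNorm_nonneg P₂ w]
  · -- `(a ^ 2)⁻¹` is the junk value `0` here, but then `r = 0` as well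
    have hw : w = 0 := by
      by_contra hw
      exact (hP₂.quadNorm_pos hw).not_ge (ha ▸ hβ)
    rw [← hP₂.mulVec_inv_mulVec r, ← hw_def, hw]
    simp [coupling_mulVec, hz₁, ha]
  · simp [coupling_mulVec, hz₁, ha, w, hP₂.mulVec_inv_mulVec]

lemma exists_coupling_mulVec_zero_sumElim [DecidableEq n₁] (hP₁ : P₁.PosDef)
    (hP₂ : P₂.PosSemidef) (z₂ : n₂ → ℝ) {r : n₁ → ℝ}
    (h : ∀ v, v ⬝ᵥ r ≤ quadNorm P₂ z₂ * quadNorm P₁ v) :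
    ∃ Q : Matrix (n₁ ⊕ n₂) (n₁ ⊕ n₂) ℝ, Q.PosSemidef ∧ Q.toBlocks₁₁ = P₁ ∧ Q.toBlocks₂₂ = P₂ ∧
      Q *ᵥ Sum.elim 0 z₂ = Sum.elim r (P₂ *ᵥ z₂) := by
  obtain ⟨Q, hQ, h₁₁, h₂₂, hQz⟩ := exists_coupling_mulVec_sumElim_zero hP₂ hP₁ z₂ h
  let σ := Equiv.sumComm n₁ n₂
  refine ⟨Q.submatrix σ σ, hQ.submatrix σ, h₂₂, h₁₁, ?_⟩
  rw [submatrix_mulVec_equiv]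
  ext (i | i) <;> simp [σ, hQz]

end Coupling

section DualObjective

variable {n₁ n₂ : Type*} [Fintype n₁] [Fintype n₂]
  {P₁ : Matrix n₁ n₁ ℝ} {P₂ : Matrix n₂ n₂ ℝ} {S : Matrix (n₁ ⊕ n₂) (n₁ ⊕ n₂) ℝ}

variable (P₁ P₂ S) in
def dualObjective (y z : n₁ ⊕ n₂ → ℝ) : ℝ :=
  2 * (z ⬝ᵥ y) - z ⬝ᵥ S *ᵥ z - (quadNorm P₁ (z ∘ Sum.inl) + quadNorm P₂ (z ∘ Sum.inr)) ^ 2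

lemma dualObjective_le_inv [DecidableEq n₁] [DecidableEq n₂] (hS : S.PosDef)
    {Q : Matrix (n₁ ⊕ n₂) (n₁ ⊕ n₂) ℝ} (hQ : Q.PosSemidef)
    (h₁₁ : Q.toBlocks₁₁ = P₁) (h₂₂ : Q.toBlocks₂₂ = P₂) (y z : n₁ ⊕ n₂ → ℝ) :
    dualObjective P₁ P₂ S y z ≤ y ⬝ᵥ (Q + S)⁻¹ *ᵥ y := by
  refine le_trans ?_ ((hS.posSemidef_add hQ).two_dotProduct_sub_le y z)
  rw [dualObjective, add_mulVec, dotProduct_add]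
  linarith [hQ.dotProduct_mulVec_le_sq_quadNorm_add h₁₁ h₂₂ z]

lemma exists_forall_dualObjective_le [DecidableEq n₁] [DecidableEq n₂] (hS : S.PosDef)
    (y : n₁ ⊕ n₂ → ℝ) : ∃ z, ∀ w, dualObjective P₁ P₂ S y w ≤ dualObjective P₁ P₂ S y z :=
  hS.exists_forall_le_of_le_two_dotProduct_sub y (by unfold dualObjective quadNorm; fun_prop)
    fun _ => sub_le_self _ (sq_nonneg _)

lemma dualObjective_sumElim_zero (hP₁ : P₁.PosSemidef) (y₁ : n₁ → ℝ) (y₂ : n₂ → ℝ)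
    (w : n₁ → ℝ) :
    dualObjective P₁ P₂ S (Sum.elim y₁ y₂) (Sum.elim w 0)
      = 2 * (w ⬝ᵥ y₁) - w ⬝ᵥ (P₁ + S.toBlocks₁₁) *ᵥ w := by
  simp [dualObjective, sumElim_dotProduct_mulVec_sumElim, sumElim_dotProduct_sumElim,
    hP₁.sq_quadNorm, add_mulVec]
  ring

lemma dualObjective_zero_sumElim (hP₂ : P₂.PosSemidef) (y₁ : n₁ → ℝ) (y₂ : n₂ → ℝ)
    (w : n₂ → ℝ) :
    dualObjective P₁ P₂ S (Sum.elim y₁ y₂) (Sum.elim 0 w)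
      = 2 * (w ⬝ᵥ y₂) - w ⬝ᵥ (P₂ + S.toBlocks₂₂) *ᵥ w := by
  simp [dualObjective, sumElim_dotProduct_mulVec_sumElim, sumElim_dotProduct_sumElim,
    hP₂.sq_quadNorm, add_mulVec]
  ring

lemma dotProduct_sub_mulVec_le_of_forall_le (hP₁ : P₁.PosSemidef) (hP₂ : P₂.PosSemidef)
    (hS : S.IsHermitian) {y z : n₁ ⊕ n₂ → ℝ}
    (hz : ∀ w, dualObjective P₁ P₂ S y w ≤ dualObjective P₁ P₂ S y z) (v : n₁ ⊕ n₂ → ℝ) :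
    v ⬝ᵥ (y - S *ᵥ z)
      ≤ (quadNorm P₁ (z ∘ Sum.inl) + quadNorm P₂ (z ∘ Sum.inr))
        * (quadNorm P₁ (v ∘ Sum.inl) + quadNorm P₂ (v ∘ Sum.inr)) := by
  set a := quadNorm P₁ (z ∘ Sum.inl) + quadNorm P₂ (z ∘ Sum.inr)
  set K := quadNorm P₁ (v ∘ Sum.inl) + quadNorm P₂ (v ∘ Sum.inr)
  suffices h : ∀ ε > 0, ε * (2 * (v ⬝ᵥ (y - S *ᵥ z) - a * K)) ≤ ε ^ 2 * (v ⬝ᵥ S *ᵥ v + K ^ 2) by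
    linarith [nonpos_of_forall_pos_mul_le h]
  intro ε hε
  have h₁ : quadNorm P₁ ((z + ε • v) ∘ Sum.inl)
      ≤ quadNorm P₁ (z ∘ Sum.inl) + ε * quadNorm P₁ (v ∘ Sum.inl) := by
    have := hP₁.quadNorm_add_le (z ∘ Sum.inl) (ε • (v ∘ Sum.inl))
    rwa [quadNorm_smul, abs_of_pos hε] at this
  have h₂ : quadNorm P₂ ((z + ε • v) ∘ Sum.inr)
      ≤ quadNorm P₂ (z ∘ Sum.inr) + ε * quadNorm P₂ (v ∘ Sum.inr) := by
    have := hP₂.quadNorm_add_le (z ∘ Sum.inr) (ε • (v ∘ Sum.inr))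
    rwa [quadNorm_smul, abs_of_pos hε] at this
  have hsq := pow_le_pow_left₀ (add_nonneg (quadNorm_nonneg _ _) (quadNorm_nonneg _ _))
    (add_le_add h₁ h₂) 2
  have hcross : z ⬝ᵥ S *ᵥ (ε • v) = ε * (v ⬝ᵥ S *ᵥ z) := by
    rw [hS.dotProduct_mulVec_comm, smul_dotProduct, smul_eq_mul]
  have hmax := hz (z + ε • v)
  rw [dualObjective, dualObjective, hS.add_dotProduct_mulVec_add, smul_dotProduct_mulVec_smul,
    hcross, add_dotProduct, smul_dotProduct, smul_eq_mul] at hmax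
  rw [dotProduct_sub]
  linarith

variable [DecidableEq n₁] [DecidableEq n₂]

lemma exists_coupling_of_forall_le_of_inr_eq_zero (hP₁ : P₁.PosDef) (hP₂ : P₂.PosDef)
    (hS : S.PosDef) {y₁ : n₁ → ℝ} {y₂ : n₂ → ℝ} {z : n₁ ⊕ n₂ → ℝ}
    (hz : ∀ w, dualObjective P₁ P₂ S (Sum.elim y₁ y₂) w
      ≤ dualObjective P₁ P₂ S (Sum.elim y₁ y₂) z) (hz₂ : z ∘ Sum.inr = 0) :
    (P₁ + S.toBlocks₁₁) *ᵥ (z ∘ Sum.inl) = y₁ ∧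
      ∃ Q : Matrix (n₁ ⊕ n₂) (n₁ ⊕ n₂) ℝ, Q.PosSemidef ∧ Q.toBlocks₁₁ = P₁ ∧
        Q.toBlocks₂₂ = P₂ ∧ (Q + S) *ᵥ z = Sum.elim y₁ y₂ := by
  set z₁ := z ∘ Sum.inl
  have hz_eq : z = Sum.elim z₁ (0 : n₂ → ℝ) := by rw [← hz₂, Sum.elim_comp_inl_inr]
  have hA : (P₁ + S.toBlocks₁₁) *ᵥ z₁ = y₁ := by
    refine (hP₁.add hS.toBlocks₁₁).mulVec_eq_of_forall_le fun w => ?_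
    have := hz (Sum.elim w 0)
    rwa [hz_eq, dualObjective_sumElim_zero hP₁.posSemidef,
      dualObjective_sumElim_zero hP₁.posSemidef] at this
  have hfo : ∀ v, v ⬝ᵥ (y₂ - S.toBlocks₂₁ *ᵥ z₁) ≤ quadNorm P₁ z₁ * quadNorm P₂ v := fun v => by
    simpa [hz_eq, mulVec_sumElim_zero, sumElim_dotProduct_sumElim] using
      dotProduct_sub_mulVec_le_of_forall_le hP₁.posSemidef hP₂.posSemidef hS.1 hz (Sum.elim 0 v)
  obtain ⟨Q, hQ, h₁₁, h₂₂, hQz⟩ := exists_coupling_mulVec_sumElim_zero hP₁.posSemidef hP₂ z₁ hfo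
  refine ⟨hA, Q, hQ, h₁₁, h₂₂, ?_⟩
  rw [add_mulVec, hz_eq, hQz, mulVec_sumElim_zero, ← hA]
  ext (i | i) <;> simp [add_mulVec]

lemma exists_coupling_of_forall_le_of_inl_eq_zero (hP₁ : P₁.PosDef) (hP₂ : P₂.PosDef)
    (hS : S.PosDef) {y₁ : n₁ → ℝ} {y₂ : n₂ → ℝ} {z : n₁ ⊕ n₂ → ℝ}
    (hz : ∀ w, dualObjective P₁ P₂ S (Sum.elim y₁ y₂) w
      ≤ dualObjective P₁ P₂ S (Sum.elim y₁ y₂) z) (hz₁ : z ∘ Sum.inl = 0) :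
    (P₂ + S.toBlocks₂₂) *ᵥ (z ∘ Sum.inr) = y₂ ∧
      ∃ Q : Matrix (n₁ ⊕ n₂) (n₁ ⊕ n₂) ℝ, Q.PosSemidef ∧ Q.toBlocks₁₁ = P₁ ∧
        Q.toBlocks₂₂ = P₂ ∧ (Q + S) *ᵥ z = Sum.elim y₁ y₂ := by
  set z₂ := z ∘ Sum.inr
  have hz_eq : z = Sum.elim (0 : n₁ → ℝ) z₂ := by rw [← hz₁, Sum.elim_comp_inl_inr]
  have hA : (P₂ + S.toBlocks₂₂) *ᵥ z₂ = y₂ := by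
    refine (hP₂.add hS.toBlocks₂₂).mulVec_eq_of_forall_le fun w => ?_
    have := hz (Sum.elim 0 w)
    rwa [hz_eq, dualObjective_zero_sumElim hP₂.posSemidef,
      dualObjective_zero_sumElim hP₂.posSemidef] at this
  have hfo : ∀ v, v ⬝ᵥ (y₁ - S.toBlocks₁₂ *ᵥ z₂) ≤ quadNorm P₂ z₂ * quadNorm P₁ v := fun v => by
    simpa [hz_eq, mulVec_zero_sumElim, sumElim_dotProduct_sumElim] using
      dotProduct_sub_mulVec_le_of_forall_le hP₁.posSemidef hP₂.posSemidef hS.1 hz (Sum.elim v 0)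
  obtain ⟨Q, hQ, h₁₁, h₂₂, hQz⟩ := exists_coupling_mulVec_zero_sumElim hP₁ hP₂.posSemidef z₂ hfo
  refine ⟨hA, Q, hQ, h₁₁, h₂₂, ?_⟩
  rw [add_mulVec, hz_eq, hQz, mulVec_zero_sumElim, ← hA]
  ext (i | i) <;> simp [add_mulVec]

end DualObjective

section Fusion

variable {d : ℕ} {P₁ P₂ : Matrix (Fin d) (Fin d) ℝ}
  {S : Matrix (Fin d ⊕ Fin d) (Fin d ⊕ Fin d) ℝ}

lemma dotProduct_Hmat_mulVec (M : Matrix (Fin d ⊕ Fin d) (Fin d ⊕ Fin d) ℝ) (x : Fin d → ℝ) :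
    x ⬝ᵥ ((Hmat d)ᵀ * M * Hmat d) *ᵥ x = Sum.elim x x ⬝ᵥ M *ᵥ Sum.elim x x := by
  rw [← mulVec_mulVec, ← mulVec_mulVec, dotProduct_mulVec, vecMul_transpose, Hmat,
    fromRows_mulVec, one_mulVec]

lemma hfun_zero (x : Fin d → ℝ) :
    hfun d P₁ P₂ S x 0 = x ⬝ᵥ (P₂ + S.toBlocks₂₂)⁻¹ *ᵥ x := by
  simp [hfun, AF]

lemma hfun_one (x : Fin d → ℝ) :
    hfun d P₁ P₂ S x 1 = x ⬝ᵥ (P₁ + S.toBlocks₁₁)⁻¹ *ᵥ x := by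
  simp [hfun, AF]

lemma hfun_of_ne {ω : ℝ} (hω₀ : ω ≠ 0) (hω₁ : ω ≠ 1) (x : Fin d → ℝ) :
    hfun d P₁ P₂ S x ω = Sum.elim x x ⬝ᵥ (Bc d P₁ P₂ S ω)⁻¹ *ᵥ Sum.elim x x := by
  rw [hfun, AF, if_neg hω₀, if_neg hω₁, dotProduct_Hmat_mulVec]

lemma dotProduct_Bc_mulVec (hP₁ : P₁.PosSemidef) (hP₂ : P₂.PosSemidef) (ω : ℝ)
    (z : Fin d ⊕ Fin d → ℝ) :
    z ⬝ᵥ Bc d P₁ P₂ S ω *ᵥ z = ω⁻¹ * quadNorm P₁ (z ∘ Sum.inl) ^ 2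
      + (1 - ω)⁻¹ * quadNorm P₂ (z ∘ Sum.inr) ^ 2 + z ⬝ᵥ S *ᵥ z := by
  obtain ⟨z₁, z₂, rfl⟩ : ∃ z₁ z₂, z = Sum.elim z₁ z₂ := ⟨_, _, (Sum.elim_comp_inl_inr z).symm⟩
  simp [Bc, add_mulVec, hP₁.sq_quadNorm, hP₂.sq_quadNorm, sumElim_dotProduct_mulVec_sumElim,
    smul_mulVec]

lemma posDef_Bc (hP₁ : P₁.PosDef) (hP₂ : P₂.PosDef) (hS : S.PosDef) {ω : ℝ} (h0 : 0 < ω)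
    (h1 : ω < 1) : (Bc d P₁ P₂ S ω).PosDef :=
  hS.posSemidef_add ((hP₁.posSemidef.smul (inv_pos.2 h0).le).fromBlocks_zero
    (hP₂.posSemidef.smul (inv_pos.2 (sub_pos.2 h1)).le))

lemma two_dotProduct_sub_Bc_le_dualObjective (hP₁ : P₁.PosSemidef) (hP₂ : P₂.PosSemidef)
    {ω : ℝ} (h0 : 0 < ω) (h1 : ω < 1) (y z : Fin d ⊕ Fin d → ℝ) :
    2 * (z ⬝ᵥ y) - z ⬝ᵥ Bc d P₁ P₂ S ω *ᵥ z ≤ dualObjective P₁ P₂ S y z := by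
  rw [dotProduct_Bc_mulVec hP₁ hP₂, dualObjective]
  linarith [add_sq_le_inv_mul_sq_add_inv_mul_sq (quadNorm P₁ (z ∘ Sum.inl))
    (quadNorm P₂ (z ∘ Sum.inr)) h0 h1]

lemma dualObjective_eq_two_dotProduct_sub_Bc (hP₁ : P₁.PosSemidef) (hP₂ : P₂.PosSemidef)
    (y : Fin d ⊕ Fin d → ℝ) {z : Fin d ⊕ Fin d → ℝ} (ha : 0 < quadNorm P₁ (z ∘ Sum.inl))
    (hb : 0 < quadNorm P₂ (z ∘ Sum.inr)) :
    dualObjective P₁ P₂ S y z = 2 * (z ⬝ᵥ y) - z ⬝ᵥ Bc d P₁ P₂ S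
      (quadNorm P₁ (z ∘ Sum.inl) / (quadNorm P₁ (z ∘ Sum.inl) + quadNorm P₂ (z ∘ Sum.inr)))
        *ᵥ z := by
  rw [dotProduct_Bc_mulVec hP₁ hP₂, inv_mul_sq_add_inv_mul_sq_eq ha hb, dualObjective]
  ring

lemma exists_hfun_le_dualObjective (hP₁ : P₁.PosDef) (hP₂ : P₂.PosDef) (hS : S.PosDef)
    (x : Fin d → ℝ) {ω : ℝ} (hω : ω ∈ Icc (0 : ℝ) 1) :
    ∃ u, hfun d P₁ P₂ S x ω ≤ dualObjective P₁ P₂ S (Sum.elim x x) u := by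
  rcases eq_or_ne ω 0 with rfl | hω₀
  · have hA := hP₂.add hS.toBlocks₂₂
    refine ⟨Sum.elim 0 ((P₂ + S.toBlocks₂₂)⁻¹ *ᵥ x), le_of_eq ?_⟩
    rw [hfun_zero, dualObjective_zero_sumElim hP₂.posSemidef,
      hA.two_dotProduct_sub_eq (hA.mulVec_inv_mulVec x)]
  rcases eq_or_ne ω 1 with rfl | hω₁
  · have hA := hP₁.add hS.toBlocks₁₁
    refine ⟨Sum.elim ((P₁ + S.toBlocks₁₁)⁻¹ *ᵥ x) 0, le_of_eq ?_⟩
    rw [hfun_one, dualObjective_sumElim_zero hP₁.posSemidef,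
      hA.two_dotProduct_sub_eq (hA.mulVec_inv_mulVec x)]
  have h0 : 0 < ω := lt_of_le_of_ne hω.1 hω₀.symm
  have h1 : ω < 1 := lt_of_le_of_ne hω.2 hω₁
  have hB := posDef_Bc hP₁ hP₂ hS h0 h1
  refine ⟨(Bc d P₁ P₂ S ω)⁻¹ *ᵥ Sum.elim x x, ?_⟩
  rw [hfun_of_ne hω₀ hω₁, ← hB.two_dotProduct_sub_eq (hB.mulVec_inv_mulVec _)]
  exact two_dotProduct_sub_Bc_le_dualObjective hP₁.posSemidef hP₂.posSemidef h0 h1 _ _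

lemma hfun_le_of_mem_Adm (hP₁ : P₁.PosDef) (hP₂ : P₂.PosDef) (hS : S.PosDef) (x : Fin d → ℝ)
    {ω : ℝ} (hω : ω ∈ Icc (0 : ℝ) 1) {P : Matrix (Fin d ⊕ Fin d) (Fin d ⊕ Fin d) ℝ}
    (hP : P ∈ Adm d P₁ P₂ S) : hfun d P₁ P₂ S x ω ≤ Sum.elim x x ⬝ᵥ P⁻¹ *ᵥ Sum.elim x x := by
  obtain ⟨u, hu⟩ := exists_hfun_le_dualObjective hP₁ hP₂ hS x hω
  obtain ⟨Q, hQ, h₁₁, h₂₂, rfl⟩ := hP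
  exact hu.trans (dualObjective_le_inv hS hQ h₁₁ h₂₂ _ u)

variable {x : Fin d → ℝ} {z : Fin d ⊕ Fin d → ℝ}

lemma exists_mem_Adm_le_hfun_one (hP₁ : P₁.PosDef) (hP₂ : P₂.PosDef) (hS : S.PosDef)
    (hz : ∀ w, dualObjective P₁ P₂ S (Sum.elim x x) w ≤ dualObjective P₁ P₂ S (Sum.elim x x) z)
    (hz₂ : z ∘ Sum.inr = 0) :
    ∃ P ∈ Adm d P₁ P₂ S, Sum.elim x x ⬝ᵥ P⁻¹ *ᵥ Sum.elim x x ≤ hfun d P₁ P₂ S x 1 := by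
  obtain ⟨hA, Q, hQ, h₁₁, h₂₂, hQz⟩ :=
    exists_coupling_of_forall_le_of_inr_eq_zero hP₁ hP₂ hS hz hz₂
  refine ⟨Q + S, ⟨Q, hQ, h₁₁, h₂₂, rfl⟩, le_of_eq ?_⟩
  rw [(hS.posSemidef_add hQ).inv_mulVec_eq_of_mulVec_eq hQz, hfun_one,
    (hP₁.add hS.toBlocks₁₁).inv_mulVec_eq_of_mulVec_eq hA, ← Sum.elim_comp_inl_inr z, hz₂]
  simp [sumElim_dotProduct_sumElim]

lemma exists_mem_Adm_le_hfun_zero (hP₁ : P₁.PosDef) (hP₂ : P₂.PosDef) (hS : S.PosDef)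
    (hz : ∀ w, dualObjective P₁ P₂ S (Sum.elim x x) w ≤ dualObjective P₁ P₂ S (Sum.elim x x) z)
    (hz₁ : z ∘ Sum.inl = 0) :
    ∃ P ∈ Adm d P₁ P₂ S, Sum.elim x x ⬝ᵥ P⁻¹ *ᵥ Sum.elim x x ≤ hfun d P₁ P₂ S x 0 := by
  obtain ⟨hA, Q, hQ, h₁₁, h₂₂, hQz⟩ :=
    exists_coupling_of_forall_le_of_inl_eq_zero hP₁ hP₂ hS hz hz₁
  refine ⟨Q + S, ⟨Q, hQ, h₁₁, h₂₂, rfl⟩, le_of_eq ?_⟩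
  rw [(hS.posSemidef_add hQ).inv_mulVec_eq_of_mulVec_eq hQz, hfun_zero,
    (hP₂.add hS.toBlocks₂₂).inv_mulVec_eq_of_mulVec_eq hA, ← Sum.elim_comp_inl_inr z, hz₁]
  simp [sumElim_dotProduct_sumElim]

lemma exists_mem_Adm_le_hfun_of_ne_zero (hP₁ : P₁.PosDef) (hP₂ : P₂.PosDef) (hS : S.PosDef)
    (hz : ∀ w, dualObjective P₁ P₂ S (Sum.elim x x) w ≤ dualObjective P₁ P₂ S (Sum.elim x x) z)
    (hz₁ : z ∘ Sum.inl ≠ 0) (hz₂ : z ∘ Sum.inr ≠ 0) :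
    ∃ ω ∈ Icc (0 : ℝ) 1, ∃ P ∈ Adm d P₁ P₂ S,
      Sum.elim x x ⬝ᵥ P⁻¹ *ᵥ Sum.elim x x ≤ hfun d P₁ P₂ S x ω := by
  obtain ⟨z₁, z₂, rfl⟩ : ∃ z₁ z₂, z = Sum.elim z₁ z₂ := ⟨_, _, (Sum.elim_comp_inl_inr z).symm⟩
  simp only [Sum.elim_comp_inl, Sum.elim_comp_inr] at hz₁ hz₂
  set a := quadNorm P₁ z₁
  set b := quadNorm P₂ z₂
  have ha : 0 < a := hP₁.quadNorm_pos hz₁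
  have hb : 0 < b := hP₂.quadNorm_pos hz₂
  set ω := a / (a + b)
  have h0 : 0 < ω := by positivity
  have h1 : ω < 1 := (div_lt_one (by positivity)).2 (by linarith)
  have hB := posDef_Bc hP₁ hP₂ hS h0 h1
  have hBz : Bc d P₁ P₂ S ω *ᵥ Sum.elim z₁ z₂ = Sum.elim x x :=
    hB.mulVec_eq_of_forall_le fun w =>
      (two_dotProduct_sub_Bc_le_dualObjective hP₁.posSemidef hP₂.posSemidef h0 h1 _ w).trans
        ((hz w).trans_eq (dualObjective_eq_two_dotProduct_sub_Bc hP₁.posSemidef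
          hP₂.posSemidef _ ha hb))
  set Q := coupling P₁ P₂ (a * b)⁻¹ z₁ z₂
  have hQ : Q.PosSemidef :=
    posSemidef_coupling hP₁.posSemidef hP₂.posSemidef (by positivity)
      (inv_mul_cancel₀ (by positivity)).le
  have hQz : (Q + S) *ᵥ Sum.elim z₁ z₂ = Sum.elim x x := by
    rw [add_mulVec, coupling_inv_mul_mulVec hP₁.posSemidef hP₂.posSemidef ha hb, ← hBz, Bc,
      add_mulVec, fromBlocks_mulVec]
    simp only [Sum.elim_comp_inl, Sum.elim_comp_inr, zero_mulVec, add_zero, zero_add, smul_mulVec]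
    rfl
  refine ⟨ω, ⟨h0.le, h1.le⟩, Q + S, ⟨Q, hQ, coupling_toBlocks₁₁ .., coupling_toBlocks₂₂ .., rfl⟩,
    le_of_eq ?_⟩
  rw [hfun_of_ne h0.ne' h1.ne, (hS.posSemidef_add hQ).inv_mulVec_eq_of_mulVec_eq hQz,
    hB.inv_mulVec_eq_of_mulVec_eq hBz]

lemma exists_mem_Adm_le_hfun (hP₁ : P₁.PosDef) (hP₂ : P₂.PosDef) (hS : S.PosDef)
    (x : Fin d → ℝ) :
    ∃ ω ∈ Icc (0 : ℝ) 1, ∃ P ∈ Adm d P₁ P₂ S,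
      Sum.elim x x ⬝ᵥ P⁻¹ *ᵥ Sum.elim x x ≤ hfun d P₁ P₂ S x ω := by
  obtain ⟨z, hz⟩ := exists_forall_dualObjective_le (P₁ := P₁) (P₂ := P₂) hS (Sum.elim x x)
  by_cases hz₂ : z ∘ Sum.inr = 0
  · exact ⟨1, right_mem_Icc.2 zero_le_one, exists_mem_Adm_le_hfun_one hP₁ hP₂ hS hz hz₂⟩
  by_cases hz₁ : z ∘ Sum.inl = 0
  · exact ⟨0, left_mem_Icc.2 zero_le_one, exists_mem_Adm_le_hfun_zero hP₁ hP₂ hS hz hz₁⟩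
  exact exists_mem_Adm_le_hfun_of_ne_zero hP₁ hP₂ hS hz hz₁ hz₂

end Fusion

lemma iInf_subtype_eq_of_isLeast {β : Type*} {B : Set β} {g : β → ℝ} {m : ℝ}
    (h : IsLeast (g '' B) m) : ⨅ b : B, g b = m := by
  rw [← h.csInf_eq, Set.image_eq_range]
  rfl

theorem gfun_max_min_general (d : ℕ)
    (P₁ P₂ : Matrix (Fin d) (Fin d) ℝ) (hP₁ : P₁.PosDef) (hP₂ : P₂.PosDef)
    (S : Matrix (Fin d ⊕ Fin d) (Fin d ⊕ Fin d) ℝ) (hS : S.PosDef)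
    (x : Fin d → ℝ) :
    IsGreatest (hfun d P₁ P₂ S x '' Set.Icc (0 : ℝ) 1) (gfun d P₁ P₂ S x) ∧
    IsLeast ((fun P : Matrix (Fin d ⊕ Fin d) (Fin d ⊕ Fin d) ℝ =>
        x ⬝ᵥ ((Hmat d)ᵀ * P⁻¹ * Hmat d) *ᵥ x) '' Adm d P₁ P₂ S)
      (gfun d P₁ P₂ S x) := by
  obtain ⟨ω₀, hω₀, P₀, hP₀, hle⟩ := exists_mem_Adm_le_hfun hP₁ hP₂ hS x
  have hweak {ω P} (hω : ω ∈ Icc (0 : ℝ) 1) (hP : P ∈ Adm d P₁ P₂ S) :=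
    hfun_le_of_mem_Adm hP₁ hP₂ hS x hω hP
  have hmin : IsLeast ((fun P => Sum.elim x x ⬝ᵥ P⁻¹ *ᵥ Sum.elim x x) '' Adm d P₁ P₂ S)
      (hfun d P₁ P₂ S x ω₀) :=
    ⟨⟨P₀, hP₀, le_antisymm hle (hweak hω₀ hP₀)⟩, by rintro _ ⟨P, hP, rfl⟩; exact hweak hω₀ hP⟩
  have hg : gfun d P₁ P₂ S x = hfun d P₁ P₂ S x ω₀ := by
    simpa only [gfun, dotProduct_Hmat_mulVec] using iInf_subtype_eq_of_isLeast hmin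
  simp only [hg, dotProduct_Hmat_mulVec]
  refine ⟨⟨⟨ω₀, hω₀, rfl⟩, ?_⟩, hmin⟩
  rintro _ ⟨ω, hω, rfl⟩
  exact (hweak hω hP₀).trans hle

/-- `g(x)` is both the attained maximum of `h_x` over `[0,1]` and
the attained minimum of `P ↦ xᵀ Hᵀ P⁻¹ H x` over `𝒜`. -/
theorem gfun_max_min (d : ℕ) (hd : 1 ≤ d)
    (P₁ P₂ : Matrix (Fin d) (Fin d) ℝ) (hP₁ : P₁.PosDef) (hP₂ : P₂.PosDef)
    (S : Matrix (Fin d ⊕ Fin d) (Fin d ⊕ Fin d) ℝ) (hS : S.PosDef)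
    (x : Fin d → ℝ) :
    IsGreatest (hfun d P₁ P₂ S x '' Set.Icc (0 : ℝ) 1) (gfun d P₁ P₂ S x) ∧
    IsLeast ((fun P : Matrix (Fin d ⊕ Fin d) (Fin d ⊕ Fin d) ℝ =>
        x ⬝ᵥ ((Hmat d)ᵀ * P⁻¹ * Hmat d) *ᵥ x) '' Adm d P₁ P₂ S)
      (gfun d P₁ P₂ S x) :=
  gfun_max_min_general d P₁ P₂ hP₁ hP₂ S hS x
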